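/- arXiv:1411.6360 — 3 statements merged into one kernel-verified Lean document; each statement's English description precedes it below -/
import Mathlib

section
/- Let π be a finitely generated group, φ: π → π an endomorphism, and π' a φ-invariant normal subgroup of π which is finitely generated. Then GR(φ) ≤ max{GR(φ'), GR(φ̂)}, where φ' = φ|_{π'} and φ̂ is the induced endomorphism of π/π'. -/
open Filter Topology

/-- Word length of `g` with respect to the (symmetrized) generating set `S`. -/
noncomputable def wordLength {G : Type*} [Group G] (S : Set G) (g : G) : ℕ :=
  sInf {n : ℕ | ∃ w : List G, w.length = n ∧ (∀ x ∈ w, x ∈ S ∨ x⁻¹ ∈ S) ∧ w.prod = g}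

/-- `L_k(f, S) = max_{s ∈ S} L(f^k(s), S)`. -/
noncomputable def Lk {G : Type*} [Group G] (S : Finset G) (f : G → G) (k : ℕ) : ℕ :=
  S.sup fun s => wordLength (S : Set G) (f^[k] s)

/-- The growth rate `GR(f) = inf_{k ≥ 1} L_k(f,S)^{1/k}` (which equals
`lim_{k→∞} L_k(f,S)^{1/k}`). -/
noncomputable def GR {G : Type*} [Group G] (S : Finset G) (f : G → G) : ℝ :=
  ⨅ k : ℕ+, (Lk S f k : ℝ) ^ (((k : ℕ) : ℝ))⁻¹

/-- `f` is eventually trivial if some iterate is the trivial endomorphism. -/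
def EventuallyTrivial {G : Type*} [Group G] (f : G → G) : Prop :=
  ∃ N : ℕ, 0 < N ∧ ∀ g, f^[N] g = 1

/-!
Lift the generators of `π ⧸ N` to `π`. Then `φ^m` of a lifted generator is a word of length
`≤ L_m(φ̂)` in the lifts times an element of `N` of bounded length, and `φ^m` stretches lengths
in `N` by at most `L_m(φ')`. Iterating, the length of `φ^(mj)` of a generator of `π` is
`O(j R^j)` with `R = max (L_m(φ̂)) (L_m(φ'))`, so `GR(φ)^m ≤ R`. Choosing `m` with both
`L_m^(1/m)` close to the growth rates of `φ'` and `φ̂` gives the bound.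
-/

section Words

variable {G H : Type*} [Group G] [Group H]

def HasWordLE (S : Set G) (g : G) (n : ℕ) : Prop :=
  ∃ w : List G, (∀ x ∈ w, x ∈ S ∨ x⁻¹ ∈ S) ∧ w.prod = g ∧ w.length ≤ n

namespace HasWordLE

variable {S T V : Set G} {g h : G} {m n : ℕ}

theorem mono (hg : HasWordLE S g m) (hmn : m ≤ n) : HasWordLE S g n :=
  let ⟨w, hw, hprod, hlen⟩ := hg
  ⟨w, hw, hprod, hlen.trans hmn⟩

theorem of_subset (hg : HasWordLE S g n) (hST : S ⊆ T) : HasWordLE T g n :=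
  let ⟨w, hw, hprod, hlen⟩ := hg
  ⟨w, fun x hx => (hw x hx).imp (@hST _) (@hST _), hprod, hlen⟩

theorem one : HasWordLE S 1 0 :=
  ⟨[], by simp, rfl, le_rfl⟩

theorem of_mem (hg : g ∈ S) : HasWordLE S g 1 :=
  ⟨[g], by simp [hg], by simp, le_rfl⟩

theorem mul (hg : HasWordLE S g m) (hh : HasWordLE S h n) : HasWordLE S (g * h) (m + n) := by
  obtain ⟨w, hw, rfl, hwlen⟩ := hg
  obtain ⟨v, hv, rfl, hvlen⟩ := hh
  refine ⟨w ++ v, ?_, List.prod_append, by simpa using Nat.add_le_add hwlen hvlen⟩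
  simpa only [List.mem_append, or_imp, forall_and] using And.intro hw hv

theorem inv (hg : HasWordLE S g n) : HasWordLE S g⁻¹ n := by
  obtain ⟨w, hw, rfl, hlen⟩ := hg
  refine ⟨(w.map (·⁻¹)).reverse, ?_, by simp [List.prod_inv_reverse], by simpa using hlen⟩
  simp only [List.mem_reverse, List.mem_map, forall_exists_index, and_imp,
    forall_apply_eq_imp_iff₂, inv_inv]
  exact fun x hx => (hw x hx).symm

theorem map (f : G →* H) {V : Set H} {M : ℕ} (hf : ∀ s ∈ S, HasWordLE V (f s) M)
    (hg : HasWordLE S g n) : HasWordLE V (f g) (M * n) := by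
  obtain ⟨w, hw, rfl, hlen⟩ := hg
  refine (?_ : HasWordLE V (f w.prod) (M * w.length)).mono (Nat.mul_le_mul_left M hlen)
  clear hlen
  induction w with
  | nil => simpa using one
  | cons x w ih =>
    have hx : HasWordLE V (f x) M := by
      rcases hw x List.mem_cons_self with hx | hx
      · exact hf x hx
      · simpa using (hf _ hx).inv
    rw [List.prod_cons, map_mul, List.length_cons, Nat.mul_succ, Nat.add_comm]
    exact hx.mul (ih fun y hy => hw y (List.mem_cons_of_mem x hy))

theorem map_iterate (f : G →* G) (k : ℕ) {M : ℕ} (hf : ∀ s ∈ S, HasWordLE V (f^[k] s) M)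
    (hg : HasWordLE S g n) : HasWordLE V (f^[k] g) (M * n) :=
  hg.map { toFun := f^[k], map_one' := iterate_map_one f k, map_mul' := iterate_map_mul f k } hf

theorem exists_lift (f : G →* H) {σ : H → G} (hσ : Function.RightInverse σ f) {T : Set H}
    {q : H} (hq : HasWordLE T q n) : ∃ a, HasWordLE (σ '' T) a n ∧ f a = q := by
  obtain ⟨w, hw, rfl, hlen⟩ := hq
  suffices ∃ a, HasWordLE (σ '' T) a w.length ∧ f a = w.prod from
    let ⟨a, ha, hfa⟩ := this
    ⟨a, ha.mono hlen, hfa⟩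
  clear hlen
  induction w with
  | nil => exact ⟨1, one, by simp⟩
  | cons y w ih =>
    obtain ⟨a, ha, hfa⟩ := ih fun x hx => hw x (List.mem_cons_of_mem y hx)
    obtain ⟨b, hb, hfb⟩ : ∃ b, HasWordLE (σ '' T) b 1 ∧ f b = y := by
      rcases hw y List.mem_cons_self with hy | hy
      · exact ⟨σ y, of_mem (Set.mem_image_of_mem σ hy), hσ y⟩
      · exact ⟨(σ y⁻¹)⁻¹, (of_mem (Set.mem_image_of_mem σ hy)).inv, by simp [hσ y⁻¹]⟩
    refine ⟨b * a, ?_, by simp [hfa, hfb]⟩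
    simpa [Nat.add_comm] using hb.mul ha

end HasWordLE

open HasWordLE

variable {S : Set G}

theorem wordLength_le {g : G} {n : ℕ} (h : HasWordLE S g n) : wordLength S g ≤ n :=
  let ⟨w, hw, hprod, hlen⟩ := h
  (Nat.sInf_le (s := {n | ∃ w : List G, w.length = n ∧ (∀ x ∈ w, x ∈ S ∨ x⁻¹ ∈ S) ∧ w.prod = g})
    ⟨w, rfl, hw, hprod⟩).trans hlen

theorem hasWordLE_wordLength (hS : Subgroup.closure S = ⊤) (g : G) :
    HasWordLE S g (wordLength S g) := by
  have hg : g ∈ Submonoid.closure (S ∪ S⁻¹) := by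
    rw [← Subgroup.closure_toSubmonoid, hS]
    trivial
  obtain ⟨w, hw, hprod⟩ := Submonoid.exists_list_of_mem_closure hg
  have hne : {n : ℕ | ∃ w : List G, w.length = n ∧ (∀ x ∈ w, x ∈ S ∨ x⁻¹ ∈ S) ∧
      w.prod = g}.Nonempty :=
    ⟨w.length, by exact ⟨w, rfl, fun x hx => by simpa using hw x hx, hprod⟩⟩
  obtain ⟨v, hvlen, hv, hvprod⟩ := Nat.sInf_mem hne
  exact ⟨v, hv, hvprod, hvlen.le⟩

theorem exists_forall_hasWordLE (hS : Subgroup.closure S = ⊤) {U : Set G} (hU : U.Finite) :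
    ∃ c, ∀ u ∈ U, HasWordLE S u c := by
  obtain ⟨c, hc⟩ := (hU.image (wordLength S)).bddAbove
  exact ⟨c, fun u hu => (hasWordLE_wordLength hS u).mono (hc ⟨u, hu, rfl⟩)⟩

end Words

section Growth

open HasWordLE

variable {G : Type*} [Group G] {S : Finset G}

theorem hasWordLE_Lk (hS : Subgroup.closure (S : Set G) = ⊤) (f : G → G) (k : ℕ) {s : G}
    (hs : s ∈ S) : HasWordLE S (f^[k] s) (Lk S f k) :=
  (hasWordLE_wordLength hS _).mono (Finset.le_sup (f := fun s => wordLength (S : Set G) (f^[k] s)) hs)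

theorem Lk_le {f : G → G} {k n : ℕ} (h : ∀ s ∈ S, HasWordLE S (f^[k] s) n) : Lk S f k ≤ n :=
  Finset.sup_le fun s hs => wordLength_le (h s hs)

theorem HasWordLE.iterate (hS : Subgroup.closure (S : Set G) = ⊤) (f : G →* G) (k : ℕ)
    {g : G} {n : ℕ} (hg : HasWordLE S g n) : HasWordLE S (f^[k] g) (Lk S f k * n) :=
  hg.map_iterate f k fun _ hs => hasWordLE_Lk hS f k hs

theorem Lk_add_le (hS : Subgroup.closure (S : Set G) = ⊤) (f : G →* G) (k l : ℕ) :
    Lk S f (k + l) ≤ Lk S f k * Lk S f l :=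
  Lk_le fun s hs => by
    simpa only [Function.iterate_add_apply] using (hasWordLE_Lk hS f l hs).iterate hS f k

theorem Lk_mul_le (hS : Subgroup.closure (S : Set G) = ⊤) (f : G →* G) (m j : ℕ) :
    Lk S f (m * j) ≤ Lk S f m ^ j := by
  induction j with
  | zero => exact Lk_le fun s hs => of_mem hs
  | succ j ih =>
    calc Lk S f (m * (j + 1)) = Lk S f (m * j + m) := rfl
      _ ≤ Lk S f (m * j) * Lk S f m := Lk_add_le hS f _ _
      _ ≤ Lk S f m ^ (j + 1) := by rw [pow_succ]; exact Nat.mul_le_mul_right _ ih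

theorem GR_nonneg (f : G → G) : 0 ≤ GR S f :=
  le_ciInf fun _ => Real.rpow_nonneg (Nat.cast_nonneg _) _

theorem GR_pow_le_Lk (f : G → G) {k : ℕ} (hk : 0 < k) : GR S f ^ k ≤ Lk S f k := by
  have hGR : GR S f ≤ (Lk S f k : ℝ) ^ (k : ℝ)⁻¹ :=
    ciInf_le (f := fun k : ℕ+ => (Lk S f k : ℝ) ^ ((k : ℕ) : ℝ)⁻¹)
      ⟨0, by rintro _ ⟨k, rfl⟩; exact Real.rpow_nonneg (Nat.cast_nonneg _) _⟩ ⟨k, hk⟩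
  calc GR S f ^ k ≤ ((Lk S f k : ℝ) ^ (k : ℝ)⁻¹) ^ k := pow_le_pow_left₀ (GR_nonneg f) hGR k
    _ = Lk S f k := Real.rpow_inv_natCast_pow (Nat.cast_nonneg _) hk.ne'

theorem exists_forall_Lk_mul_le_pow (hS : Subgroup.closure (S : Set G) = ⊤) (f : G →* G)
    {c : ℝ} (hc : GR S f < c) : ∃ k, 0 < k ∧ ∀ j, (Lk S f (k * j) : ℝ) ≤ c ^ (k * j) := by
  obtain ⟨k, hk⟩ := exists_lt_of_ciInf_lt hc
  have hLk : (Lk S f k : ℝ) ≤ c ^ (k : ℕ) := by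
    rw [← Real.rpow_inv_natCast_pow (Nat.cast_nonneg (Lk S f k)) k.ne_zero]
    exact pow_le_pow_left₀ (Real.rpow_nonneg (Nat.cast_nonneg _) _) hk.le _
  refine ⟨k, k.pos, fun j => ?_⟩
  calc (Lk S f (k * j) : ℝ) ≤ (Lk S f k : ℝ) ^ j := by exact_mod_cast Lk_mul_le hS f k j
    _ ≤ c ^ (k * j : ℕ) := by rw [pow_mul]; exact pow_le_pow_left₀ (Nat.cast_nonneg _) hLk j

/-- Exponential growth beats linear growth. -/
theorem le_of_forall_pow_succ_le {x y C : ℝ} (hy : 0 < y)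
    (h : ∀ n : ℕ, x ^ (n + 1) ≤ C * (n + 1) * y ^ n) : x ≤ y := by
  by_contra! hyx
  have hq : 1 < x / y := (one_lt_div hy).2 hyx
  have hC : 0 < C := by linarith [show x ≤ C by simpa using h 0]
  obtain ⟨n, hn⟩ := (((tendsto_pow_const_div_const_pow_of_one_lt 1 hq).comp
    (tendsto_add_atTop_nat 1)).eventually (gt_mem_nhds (div_pos hy hC))).exists
  simp only [Function.comp_apply, pow_one, Nat.cast_add, Nat.cast_one] at hn
  rw [div_lt_div_iff₀ (pow_pos (zero_lt_one.trans hq) _) hC] at hn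
  have hxn : x ^ (n + 1) = (x / y) ^ (n + 1) * y * y ^ n := by
    rw [div_pow, pow_succ y n]; field_simp
  have hqn : (x / y) ^ (n + 1) * y ≤ C * (n + 1) :=
    le_of_mul_le_mul_right (hxn ▸ h n) (pow_pos hy n)
  linarith

theorem GR_le_of_Lk_le (f : G → G) {m : ℕ} (hm : 0 < m) {c C : ℝ} (hc : 0 < c)
    (h : ∀ n : ℕ, (Lk S f (m * (n + 1)) : ℝ) ≤ C * (n + 1) * (c ^ m) ^ n) : GR S f ≤ c := by
  refine (pow_le_pow_iff_left₀ (GR_nonneg f) hc.le hm.ne').1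
    (le_of_forall_pow_succ_le (C := C) (pow_pos hc m) fun n => ?_)
  rw [← pow_mul]
  exact (GR_pow_le_Lk f (Nat.mul_pos hm n.succ_pos)).trans (h n)

end Growth

section Extension

open HasWordLE

variable {G : Type*} [Group G] {N : Subgroup G}

theorem Set.Finite.exists_forall_eq_mul_hasWordLE [N.Normal] {X : Set G} (hX : X.Finite)
    {T : Set (G ⧸ N)} (hT : Subgroup.closure T = ⊤) {K : Set N} (hK : Subgroup.closure K = ⊤) :
    ∃ D, ∀ x ∈ X, ∃ (b : G) (ν : N),
      HasWordLE ((·.out) '' T) b (wordLength T (x : G ⧸ N)) ∧ HasWordLE K ν D ∧ x = b * ν := by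
  have hlift : ∀ x : G, ∃ b, HasWordLE ((·.out) '' T) b (wordLength T (x : G ⧸ N)) ∧
      b⁻¹ * x ∈ N := by
    intro x
    obtain ⟨b, hb, hbx⟩ := (hasWordLE_wordLength hT (x : G ⧸ N)).exists_lift
      (QuotientGroup.mk' N) QuotientGroup.out_eq'
    exact ⟨b, hb, QuotientGroup.eq.1 hbx⟩
  choose b hb hbN using hlift
  obtain ⟨D, hD⟩ := exists_forall_hasWordLE hK (hX.image fun x => (⟨(b x)⁻¹ * x, hbN x⟩ : N))
  exact ⟨D, fun x hx => ⟨b x, _, hb x, hD _ ⟨x, hx, rfl⟩, by simp⟩⟩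

theorem HasWordLE.iterate_val {K : Finset N} (hK : Subgroup.closure (K : Set N) = ⊤)
    (φ : G →* G) (φN : N →* N) (hφN : ∀ x, (φN x : G) = φ x) (k : ℕ) {ν : N} {d : ℕ}
    (hν : HasWordLE K ν d) :
    HasWordLE (Subtype.val '' (K : Set N)) (φ^[k] ν) (Lk K φN k * d) := by
  have h := (hν.iterate hK φN k).map N.subtype fun x hx => of_mem (Set.mem_image_of_mem _ hx)
  rwa [one_mul, N.subtype_apply, Function.Semiconj.iterate_right (f := Subtype.val) hφN k ν] at h

/-- The bound solves the recursion `x (j + 1) ≤ P * x j + D * B ^ (j + 1)` for the length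
`x j` of `φ^[m * (j + 1)] a`, obtained by applying `φ^[m * (j + 1)]` to `φ^[m] a = b * ν`. -/
theorem hasWordLE_iterate_mul_succ (φ : G →* G) {m P B D R : ℕ} {A : Set G} {K : Set N}
    (hA : ∀ a ∈ A, ∃ (b : G) (ν : N), HasWordLE A b P ∧ HasWordLE K ν D ∧ φ^[m] a = b * ν)
    (hK : ∀ (j : ℕ) (ν : N) (d : ℕ), HasWordLE K ν d →
      HasWordLE (Subtype.val '' K) (φ^[m * j] ν) (B ^ j * d))
    (hP : P ≤ R) (hB : B ≤ R) (j : ℕ) :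
    ∀ a ∈ A, HasWordLE (A ∪ Subtype.val '' K) (φ^[m * (j + 1)] a) ((D * (j + 1) + R) * R ^ j) := by
  induction j with
  | zero =>
    intro a ha
    obtain ⟨b, ν, hb, hν, hφa⟩ := hA a ha
    have hν' : HasWordLE (Subtype.val '' K) (ν : G) D := by simpa using hK 0 ν D hν
    rw [zero_add, mul_one, hφa]
    refine ((hb.of_subset Set.subset_union_left).mul (hν'.of_subset Set.subset_union_right)).mono ?_
    lia
  | succ j ih =>
    intro a ha
    obtain ⟨b, ν, hb, hν, hφa⟩ := hA a ha
    have hsplit : φ^[m * (j + 1 + 1)] a = φ^[m * (j + 1)] b * φ^[m * (j + 1)] ν := by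
      rw [Nat.mul_succ, Function.iterate_add_apply, hφa, iterate_map_mul]
    have hb' := hb.map_iterate φ (m * (j + 1)) ih
    have hν' := (hK (j + 1) ν D hν).of_subset (Set.subset_union_right (s := A))
    rw [hsplit]
    refine (hb'.mul hν').mono ?_
    calc (D * (j + 1) + R) * R ^ j * P + B ^ (j + 1) * D
        ≤ (D * (j + 1) + R) * R ^ j * R + R ^ (j + 1) * D := by gcongr
      _ = (D * (j + 1 + 1) + R) * R ^ (j + 1) := by ring

theorem exists_Lk_mul_succ_le [N.Normal] {S : Finset G} (hS : Subgroup.closure (S : Set G) = ⊤)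
    {S' : Finset N} (hS' : Subgroup.closure (S' : Set N) = ⊤)
    {T : Finset (G ⧸ N)} (hT : Subgroup.closure (T : Set (G ⧸ N)) = ⊤)
    (φ : G →* G) (φN : N →* N) (hφN : ∀ x, (φN x : G) = φ x)
    (φQ : G ⧸ N →* G ⧸ N) (hφQ : ∀ g : G, φQ g = φ g) (m : ℕ) :
    ∃ C, ∀ n : ℕ, Lk S φ (m * (n + 1)) ≤ C * (n + 1) * max (Lk T φQ m) (Lk S' φN m) ^ n := by
  set R := max (Lk T φQ m) (Lk S' φN m)
  set A : Set G := (·.out) '' (T : Set (G ⧸ N))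
  obtain ⟨D, hD⟩ := ((T.finite_toSet.image (·.out)).image φ^[m]).exists_forall_eq_mul_hasWordLE
    hT hS'
  have hA : ∀ a ∈ A, ∃ (b : G) (ν : N), HasWordLE A b (Lk T φQ m) ∧ HasWordLE S' ν D ∧
      φ^[m] a = b * ν := by
    rintro _ ⟨t, ht, rfl⟩
    obtain ⟨b, ν, hb, hν, hφt⟩ := hD _ ⟨_, ⟨t, ht, rfl⟩, rfl⟩
    refine ⟨b, ν, hb.mono ?_, hν, hφt⟩
    rw [Function.Semiconj.iterate_right (f := ((↑) : G → G ⧸ N)) (fun g => (hφQ g).symm),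
      QuotientGroup.out_eq']
    exact Finset.le_sup (f := fun t => wordLength (T : Set (G ⧸ N)) (φQ^[m] t)) ht
  have hK (j : ℕ) (ν : N) (d : ℕ) (hν : HasWordLE S' ν d) :
      HasWordLE (Subtype.val '' (S' : Set N)) (φ^[m * j] ν) (Lk S' φN m ^ j * d) :=
    (hν.iterate_val hS' φ φN hφN (m * j)).mono (Nat.mul_le_mul_right d (Lk_mul_le hS' φN m j))
  have hgrowth := hasWordLE_iterate_mul_succ φ hA hK (le_max_left _ _) (le_max_right _ _)
  obtain ⟨E, hE⟩ := S.finite_toSet.exists_forall_eq_mul_hasWordLE hT hS'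
  obtain ⟨F, hF⟩ := (S.finite_toSet.image fun s : G => wordLength (T : Set (G ⧸ N)) s).bddAbove
  obtain ⟨c, hc⟩ := exists_forall_hasWordLE hS
    ((T.finite_toSet.image (·.out)).union (S'.finite_toSet.image Subtype.val))
  refine ⟨c * (F * (D + R) + E * R), fun n => Lk_le fun s hs => ?_⟩
  obtain ⟨b, ν, hb, hν, hsbν⟩ := hE s hs
  have hb' := (hb.mono (hF ⟨s, hs, rfl⟩)).map_iterate φ (m * (n + 1)) (hgrowth n)
  have hν' := (hK (n + 1) ν E hν).of_subset (Set.subset_union_right (s := A))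
  have hs' := (hb'.mul hν').map (MonoidHom.id G) hc
  rw [hsbν, iterate_map_mul]
  refine hs'.mono ?_
  have h1 : D * (n + 1) + R ≤ (D + R) * (n + 1) := by nlinarith
  have h2 : Lk S' φN m ^ (n + 1) ≤ R * (n + 1) * R ^ n :=
    calc Lk S' φN m ^ (n + 1) ≤ R ^ (n + 1) := Nat.pow_le_pow_left (le_max_right _ _) _
      _ = R * 1 * R ^ n := by ring
      _ ≤ R * (n + 1) * R ^ n := by gcongr; lia
  calc c * ((D * (n + 1) + R) * R ^ n * F + Lk S' φN m ^ (n + 1) * E)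
      ≤ c * ((D + R) * (n + 1) * R ^ n * F + R * (n + 1) * R ^ n * E) := by gcongr
    _ = c * (F * (D + R) + E * R) * (n + 1) * R ^ n := by ring

end Extension

/-- If `π'` is a `φ`-invariant, finitely generated normal subgroup of the
finitely generated group `π`, then `GR(φ) ≤ max{GR(φ'), GR(φ̂)}`, where `φ'` is the
restriction of `φ` to `π'` and `φ̂` is the induced endomorphism of `π/π'`. -/
theorem GR_le_max_restriction_quotient {π : Type*} [Group π] (S : Finset π)
    (hS : Subgroup.closure (S : Set π) = ⊤) (φ : π →* π)
    (N : Subgroup π) [N.Normal] (hinv : ∀ g ∈ N, φ g ∈ N)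
    (S' : Finset N) (hS' : Subgroup.closure (S' : Set N) = ⊤)
    (T : Finset (π ⧸ N)) (hT : Subgroup.closure (T : Set (π ⧸ N)) = ⊤) :
    GR S ⇑φ ≤ max (GR S' (fun x : N => (⟨φ x, hinv x x.2⟩ : N)))
      (GR T ⇑(QuotientGroup.map N N φ (fun g hg => hinv g hg))) := by
  set φN : N →* N := (φ.domRestrict N).codRestrict N fun x => hinv x x.2
  set φQ := QuotientGroup.map N N φ fun g hg => hinv g hg
  change GR S φ ≤ max (GR S' φN) (GR T φQ)
  refine le_of_forall_gt_imp_ge_of_dense fun c hc => ?_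
  have hc0 : 0 < c := (le_max_of_le_left (GR_nonneg φN)).trans_lt hc
  obtain ⟨k₁, hk₁, hQ⟩ := exists_forall_Lk_mul_le_pow hT φQ ((le_max_right _ _).trans_lt hc)
  obtain ⟨k₂, hk₂, hN⟩ := exists_forall_Lk_mul_le_pow hS' φN ((le_max_left _ _).trans_lt hc)
  obtain ⟨C, hC⟩ := exists_Lk_mul_succ_le hS hS' hT φ φN (fun _ => rfl) φQ (fun _ => rfl) (k₁ * k₂)
  have hR : ((max (Lk T φQ (k₁ * k₂)) (Lk S' φN (k₁ * k₂)) : ℕ) : ℝ) ≤ c ^ (k₁ * k₂) := by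
    push_cast
    exact max_le (hQ k₂) (Nat.mul_comm k₂ k₁ ▸ hN k₁)
  refine GR_le_of_Lk_le φ (Nat.mul_pos hk₁ hk₂) (C := C) hc0 fun n => ?_
  calc (Lk S φ (k₁ * k₂ * (n + 1)) : ℝ)
      ≤ C * (n + 1) * ((max (Lk T φQ (k₁ * k₂)) (Lk S' φN (k₁ * k₂)) : ℕ) : ℝ) ^ n := by
        exact_mod_cast hC n
    _ ≤ C * (n + 1) * (c ^ (k₁ * k₂)) ^ n := by gcongr
end

section
/- Let φ: ℤⁿ → ℤⁿ be a group endomorphism given by an n×n integer matrix D. Then GR(φ) = sp(D), the maximum of the absolute values of the (complex) eigenvalues of D. -/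
open Filter Topology

/-!
For a finite generating set `S` of `ℤⁿ`, word length and the sup norm are comparable up to
multiplicative constants, so `L_k(φ, S)` is comparable to the ℓ∞ operator norm of `D ^ k`, whose
`k`-th roots tend to `sp(D)` by Gelfand's formula. Since `k ↦ L_k` is submultiplicative,
`L_{km} ≤ L_k ^ m`, so the limit `sp(D)` is also a lower bound for every `L_k ^ (1/k)`, and
hence equals their infimum.
-/

open Multiplicative

section WordLength

variable {G : Type*} [Group G] {S : Set G}

theorem wordLength_le_length {g : G} (w : List G) (hw : ∀ x ∈ w, x ∈ S ∨ x⁻¹ ∈ S)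
    (hg : w.prod = g) : wordLength S g ≤ w.length :=
  Nat.sInf_le ⟨w, rfl, hw, hg⟩

theorem exists_length_eq_wordLength (hS : Subgroup.closure S = ⊤) (g : G) :
    ∃ w : List G, w.length = wordLength S g ∧ (∀ x ∈ w, x ∈ S ∨ x⁻¹ ∈ S) ∧ w.prod = g := by
  have hg : g ∈ Submonoid.closure (S ∪ S⁻¹) := by
    rw [← Subgroup.closure_toSubmonoid, hS]; trivial
  obtain ⟨w, hw, hg⟩ := Submonoid.exists_list_of_mem_closure hg
  have hne : {n | ∃ w : List G, w.length = n ∧ (∀ x ∈ w, x ∈ S ∨ x⁻¹ ∈ S) ∧ w.prod = g}.Nonempty :=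
    ⟨w.length, w, rfl, hw, hg⟩
  exact Nat.sInf_mem hne

theorem wordLength_inv_le (hS : Subgroup.closure S = ⊤) (g : G) :
    wordLength S g⁻¹ ≤ wordLength S g := by
  obtain ⟨w, hw, hwS, rfl⟩ := exists_length_eq_wordLength hS g
  have hletters : ∀ x ∈ (w.map (·⁻¹)).reverse, x ∈ S ∨ x⁻¹ ∈ S := by
    simpa [or_comm] using fun x hx => hwS x⁻¹ hx
  simpa [hw] using wordLength_le_length _ hletters (List.prod_inv_reverse w).symm

theorem wordLength_inv (hS : Subgroup.closure S = ⊤) (g : G) :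
    wordLength S g⁻¹ = wordLength S g :=
  (wordLength_inv_le hS g).antisymm (by simpa using wordLength_inv_le hS g⁻¹)

theorem wordLength_mul_le (hS : Subgroup.closure S = ⊤) (g h : G) :
    wordLength S (g * h) ≤ wordLength S g + wordLength S h := by
  obtain ⟨u, hu, huS, rfl⟩ := exists_length_eq_wordLength hS g
  obtain ⟨v, hv, hvS, rfl⟩ := exists_length_eq_wordLength hS h
  refine (wordLength_le_length (u ++ v) ?_ List.prod_append).trans (by simp [hu, hv])
  simpa [or_imp, forall_and] using ⟨huS, hvS⟩

noncomputable def wordLengthSeminorm (hS : Subgroup.closure S = ⊤) : GroupSeminorm G where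
  toFun g := wordLength S g
  map_one' := by simpa using wordLength_le_length (S := S) [] (by simp) rfl
  mul_le' g h := mod_cast wordLength_mul_le hS g h
  inv' g := mod_cast wordLength_inv hS g

theorem GroupSeminorm.apply_list_prod_le (N : GroupSeminorm G) {B : ℝ} (hB : ∀ s ∈ S, N s ≤ B)
    (w : List G) (hw : ∀ x ∈ w, x ∈ S ∨ x⁻¹ ∈ S) : N w.prod ≤ w.length * B := by
  induction w with
  | nil => simp
  | cons x w ih =>
    have hx : N x ≤ B := (hw x (by simp)).elim (hB x) fun h => map_inv_eq_map N x ▸ hB _ h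
    calc N (x :: w).prod ≤ N x + N w.prod := map_mul_le_add N x w.prod
      _ ≤ B + w.length * B := add_le_add hx (ih fun y hy => hw y (by simp [hy]))
      _ = (x :: w).length * B := by rw [List.length_cons]; push_cast; ring

theorem GroupSeminorm.apply_le_wordLength_mul (N : GroupSeminorm G)
    (hS : Subgroup.closure S = ⊤) {B : ℝ} (hB : ∀ s ∈ S, N s ≤ B) (g : G) :
    N g ≤ wordLength S g * B := by
  obtain ⟨w, hw, hwS, rfl⟩ := exists_length_eq_wordLength hS g
  simpa [hw] using N.apply_list_prod_le hB w hwS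

end WordLength

section GrowthRate

variable {G : Type*} [Group G] {S : Finset G}

theorem wordLength_iterate_le_Lk (f : G → G) (k : ℕ) {s : G} (hs : s ∈ S) :
    wordLength (S : Set G) (f^[k] s) ≤ Lk S f k :=
  Finset.le_sup (f := fun s => wordLength (S : Set G) (f^[k] s)) hs

theorem Lk_le_of_forall_le (f : G → G) (k : ℕ) {X : ℝ} (hX : 0 ≤ X)
    (h : ∀ s ∈ S, (wordLength (S : Set G) (f^[k] s) : ℝ) ≤ X) : (Lk S f k : ℝ) ≤ X := by
  rcases S.eq_empty_or_nonempty with rfl | hne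
  · simpa [Lk] using hX
  · obtain ⟨s, hs, hsup⟩ :=
      Finset.exists_mem_eq_sup S hne fun s => wordLength (S : Set G) (f^[k] s)
    rw [Lk, hsup]
    exact h s hs

theorem Lk_add_le_mul (hS : Subgroup.closure (S : Set G) = ⊤) (f : Monoid.End G) (k l : ℕ) :
    (Lk S f (k + l) : ℝ) ≤ Lk S f k * Lk S f l := by
  refine Lk_le_of_forall_le _ _ (by positivity) fun s hs => ?_
  have hbound : ∀ t ∈ S, ((wordLengthSeminorm hS).comp (f ^ k)) t ≤ Lk S f k := fun t ht =>
    Nat.cast_le.mpr (wordLength_iterate_le_Lk f k ht)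
  calc (wordLength (S : Set G) (f^[k + l] s) : ℝ)
      = ((wordLengthSeminorm hS).comp (f ^ k)) (f^[l] s) := by
        rw [Function.iterate_add_apply]; rfl
    _ ≤ wordLength (S : Set G) (f^[l] s) * Lk S f k :=
        GroupSeminorm.apply_le_wordLength_mul _ hS hbound _
    _ ≤ Lk S f l * Lk S f k := by gcongr; exact_mod_cast wordLength_iterate_le_Lk f l hs
    _ = Lk S f k * Lk S f l := mul_comm _ _

end GrowthRate

section Submultiplicative

theorem tendsto_const_rpow_inv_natCast {c : ℝ} (hc : 0 < c) :
    Tendsto (fun k : ℕ => c ^ (k : ℝ)⁻¹) atTop (𝓝 1) := by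
  have h := (Real.continuousAt_const_rpow hc.ne' (b := 0)).tendsto.comp
    (tendsto_inv_atTop_zero.comp tendsto_natCast_atTop_atTop)
  rwa [Real.rpow_zero] at h

variable {L a : ℕ → ℝ} {c ρ : ℝ}

theorem le_pow_of_submultiplicative (hL : ∀ k, 0 ≤ L k) (hsub : ∀ k l, L (k + l) ≤ L k * L l)
    (k m : ℕ) : L (k * (m + 1)) ≤ L k ^ (m + 1) := by
  induction m with
  | zero => simp
  | succ m ih =>
    calc L (k * (m + 1 + 1)) = L (k * (m + 1) + k) := by ring_nf
      _ ≤ L (k * (m + 1)) * L k := hsub _ _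
      _ ≤ L k ^ (m + 1) * L k := by gcongr; exact hL k
      _ = L k ^ (m + 1 + 1) := (pow_succ _ _).symm

/-- Along the multiples `k * (m + 1)`, submultiplicativity bounds `a` by `c * L k ^ (m + 1)`, and
the `(k * (m + 1))`-th roots of these bounds tend to `L k ^ k⁻¹`. -/
theorem le_rpow_inv_of_submultiplicative (hc : 0 < c) (hL : ∀ k, 0 ≤ L k)
    (ha : ∀ k, 0 ≤ a k) (hsub : ∀ k l, L (k + l) ≤ L k * L l) (haL : ∀ k, a k ≤ c * L k)
    (hlim : Tendsto (fun k : ℕ => a k ^ (k : ℝ)⁻¹) atTop (𝓝 ρ)) {k : ℕ} (hk : 0 < k) :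
    ρ ≤ L k ^ (k : ℝ)⁻¹ := by
  have hmul : Tendsto (fun m : ℕ => k * (m + 1)) atTop atTop :=
    tendsto_atTop_mono (fun m => show m ≤ k * (m + 1) by nlinarith) tendsto_id
  have hupper := ((tendsto_const_rpow_inv_natCast hc).comp hmul).mul_const (L k ^ (k : ℝ)⁻¹)
  rw [one_mul] at hupper
  refine le_of_tendsto_of_tendsto' (hlim.comp hmul) hupper fun m => ?_
  have hroot : (L k ^ (m + 1)) ^ ((k * (m + 1) : ℕ) : ℝ)⁻¹ = L k ^ (k : ℝ)⁻¹ := by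
    rw [← Real.rpow_natCast_mul (hL k)]
    congr 1
    push_cast
    field_simp
  calc a (k * (m + 1)) ^ ((k * (m + 1) : ℕ) : ℝ)⁻¹
      ≤ (c * L k ^ (m + 1)) ^ ((k * (m + 1) : ℕ) : ℝ)⁻¹ := by
        gcongr
        · exact ha _
        · exact (haL _).trans (by gcongr; exact le_pow_of_submultiplicative hL hsub k m)
    _ = c ^ ((k * (m + 1) : ℕ) : ℝ)⁻¹ * L k ^ (k : ℝ)⁻¹ := by
        rw [Real.mul_rpow hc.le (pow_nonneg (hL k) _), hroot]

theorem iInf_rpow_inv_eq_of_submultiplicative (hc : 0 < c) (hL : ∀ k, 0 ≤ L k)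
    (ha : ∀ k, 0 ≤ a k) (hsub : ∀ k l, L (k + l) ≤ L k * L l) (hLa : ∀ k, L k ≤ c * a k)
    (haL : ∀ k, a k ≤ c * L k) (hlim : Tendsto (fun k : ℕ => a k ^ (k : ℝ)⁻¹) atTop (𝓝 ρ)) :
    ⨅ k : ℕ+, L k ^ ((k : ℕ) : ℝ)⁻¹ = ρ := by
  have hbdd : BddBelow (Set.range fun k : ℕ+ => L k ^ ((k : ℕ) : ℝ)⁻¹) :=
    ⟨0, Set.forall_mem_range.mpr fun k => by have := hL k; positivity⟩
  refine le_antisymm ?_ (le_ciInf fun k =>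
    le_rpow_inv_of_submultiplicative hc hL ha hsub haL hlim k.pos)
  have hupper := (tendsto_const_rpow_inv_natCast hc).mul hlim
  rw [one_mul] at hupper
  refine ge_of_tendsto hupper ((eventually_gt_atTop 0).mono fun k hk => ?_)
  calc ⨅ k : ℕ+, L k ^ ((k : ℕ) : ℝ)⁻¹ ≤ L k ^ (k : ℝ)⁻¹ := ciInf_le hbdd ⟨k, hk⟩
    _ ≤ (c * a k) ^ (k : ℝ)⁻¹ := by gcongr; exacts [hL k, hLa k]
    _ = c ^ (k : ℝ)⁻¹ * a k ^ (k : ℝ)⁻¹ := Real.mul_rpow hc.le (ha k)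

end Submultiplicative

namespace GroupSeminorm

variable {G : Type*} [Group G]

theorem apply_pow_le (N : GroupSeminorm G) (g : G) (m : ℕ) : N (g ^ m) ≤ m * N g := by
  induction m with
  | zero => simp
  | succ m ih =>
    calc N (g ^ (m + 1)) ≤ N (g ^ m) + N g := by rw [pow_succ]; exact map_mul_le_add N _ _
      _ ≤ (m + 1 : ℕ) * N g := by push_cast; linarith

theorem apply_zpow_le (N : GroupSeminorm G) (g : G) (m : ℤ) : N (g ^ m) ≤ ‖m‖ * N g := by
  obtain ⟨k, rfl | rfl⟩ := Int.eq_nat_or_neg m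
  · simpa using N.apply_pow_le g k
  · simpa [map_inv_eq_map] using N.apply_pow_le g k

variable {ι : Type*} [Fintype ι] [DecidableEq ι]

theorem apply_ofAdd_le (N : GroupSeminorm (Multiplicative (ι → ℤ))) (v : ι → ℤ) :
    N (ofAdd v) ≤ ‖v‖ * ∑ i, N (ofAdd (Pi.single i 1 : ι → ℤ)) := by
  have hadd : ∀ x y : ι → ℤ, N (ofAdd (x + y)) ≤ N (ofAdd x) + N (ofAdd y) :=
    fun x y => map_mul_le_add N (ofAdd x) (ofAdd y)
  calc N (ofAdd v) = N (ofAdd (∑ i, v i • Pi.single i 1 : ι → ℤ)) := by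
        rw [← pi_eq_sum_univ' v]
    _ ≤ ∑ i, N (ofAdd (v i • Pi.single i 1 : ι → ℤ)) :=
        Finset.le_sum_of_subadditive (fun x : ι → ℤ => N (ofAdd x)) (by simp) hadd _ _
    _ ≤ ∑ i, ‖v‖ * N (ofAdd (Pi.single i 1 : ι → ℤ)) := by
        gcongr with i
        rw [ofAdd_zsmul]
        exact (N.apply_zpow_le _ _).trans (by gcongr; exact norm_le_pi_norm v i)
    _ = ‖v‖ * ∑ i, N (ofAdd (Pi.single i 1 : ι → ℤ)) := (Finset.mul_sum _ _ _).symm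

end GroupSeminorm

-- The ℓ∞ operator norm is submultiplicative (as Gelfand's formula needs) and is compatible with
-- the sup norm on `ι → ℤ` through `Matrix.linfty_opNorm_mulVec`.
attribute [local instance] Matrix.linftyOpSeminormedAddCommGroup Matrix.linftyOpNormedRing
  Matrix.linftyOpNormedAlgebra

namespace Matrix

theorem linfty_opNorm_le_sum_norm_col {m n α : Type*} [Fintype m] [Fintype n]
    [SeminormedAddCommGroup α] (A : Matrix m n α) : ‖A‖ ≤ ∑ j, ‖A.col j‖ := by
  have h : ‖A‖₊ ≤ ∑ j, ‖A.col j‖₊ := by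
    rw [linfty_opNNNorm_def]
    exact Finset.sup_le fun i _ => Finset.sum_le_sum fun j _ => nnnorm_le_pi_nnnorm (A.col j) i
  simpa using NNReal.coe_le_coe.mpr h

theorem linfty_opNorm_map_of_norm_eq {m n α β : Type*} [Fintype m] [Fintype n]
    [SeminormedAddCommGroup α] [SeminormedAddCommGroup β] {f : α → β} (hf : ∀ x, ‖f x‖ = ‖x‖)
    (A : Matrix m n α) : ‖A.map f‖ = ‖A‖ := by
  have hf' : ∀ x, ‖f x‖₊ = ‖x‖₊ := fun x => NNReal.eq (hf x)
  exact congrArg NNReal.toReal (by simp [linfty_opNNNorm_def, hf'] : ‖A.map f‖₊ = ‖A‖₊)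

variable {ι : Type*} [Fintype ι] [DecidableEq ι]

theorem spectralRadius_eq_ofReal_sSup (M : Matrix ι ι ℂ) :
    spectralRadius ℂ M =
      ENNReal.ofReal (sSup {r : ℝ | ∃ μ : ℂ, M.charpoly.IsRoot μ ∧ r = ‖μ‖}) := by
  have hset : {r : ℝ | ∃ μ : ℂ, M.charpoly.IsRoot μ ∧ r = ‖μ‖} = norm '' spectrum ℂ M := by
    ext r
    simp [mem_spectrum_iff_isRoot_charpoly, eq_comm]
  rw [hset]
  rcases (spectrum ℂ M).eq_empty_or_nonempty with h | h
  · simp [spectralRadius, h]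
  obtain ⟨z, hz, hr⟩ := spectrum.exists_nnnorm_eq_spectralRadius_of_nonempty h
  have hmax : IsGreatest (norm '' spectrum ℂ M) ‖z‖ := by
    refine ⟨⟨z, hz, rfl⟩, ?_⟩
    rintro _ ⟨μ, hμ, rfl⟩
    have : (‖μ‖₊ : ENNReal) ≤ ‖z‖₊ := hr ▸ le_iSup₂ (α := ENNReal) μ hμ
    exact_mod_cast this
  rw [← hr, hmax.csSup_eq, ofReal_norm]
  rfl

/-- Gelfand's formula for an integer matrix. -/
theorem tendsto_norm_pow_rpow_inv (D : Matrix ι ι ℤ) :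
    Tendsto (fun k : ℕ => ‖D ^ k‖ ^ (k : ℝ)⁻¹) atTop
      (𝓝 (sSup {r : ℝ | ∃ μ : ℂ, (D.map (fun i => (i : ℂ))).charpoly.IsRoot μ ∧ r = ‖μ‖})) := by
  have h := spectrum.pow_norm_pow_one_div_tendsto_nhds_spectralRadius
    (D.map (fun i => (i : ℂ)))
  rw [spectralRadius_eq_ofReal_sSup] at h
  have hρ :
      0 ≤ sSup {r : ℝ | ∃ μ : ℂ, (D.map (fun i => (i : ℂ))).charpoly.IsRoot μ ∧ r = ‖μ‖} :=
    Real.sSup_nonneg fun r ⟨μ, _, hr⟩ => hr ▸ norm_nonneg μ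
  have hnorm : ∀ k : ℕ, ‖D.map (fun i => (i : ℂ)) ^ k‖ = ‖D ^ k‖ := fun k => by
    rw [show D.map (fun i => (i : ℂ)) ^ k = (D ^ k).map (fun i => (i : ℂ)) from
      (Matrix.map_pow D (Int.castRingHom ℂ) k).symm]
    exact linfty_opNorm_map_of_norm_eq (fun x => by simp [Int.norm_eq_abs]) _
  convert (ENNReal.tendsto_toReal ENNReal.ofReal_ne_top).comp h using 1
  · ext k
    simp [hnorm, ENNReal.toReal_ofReal, Real.rpow_nonneg]
  · rw [ENNReal.toReal_ofReal hρ]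

end Matrix

section IntegerLattice

open Matrix

variable {ι : Type*} [Fintype ι]

def Matrix.mulVecEnd (A : Matrix ι ι ℤ) : Monoid.End (Multiplicative (ι → ℤ)) :=
  AddMonoidHom.toMultiplicative A.mulVecLin.toAddMonoidHom

variable [DecidableEq ι]

theorem Matrix.mulVecEnd_iterate (A : Matrix ι ι ℤ) (k : ℕ) (g : Multiplicative (ι → ℤ)) :
    (⇑A.mulVecEnd)^[k] g = ofAdd ((A ^ k) *ᵥ g.toAdd) := by
  induction k with
  | zero => simp
  | succ k ih =>
    rw [Function.iterate_succ_apply', ih, pow_succ', ← mulVec_mulVec]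
    rfl

variable {S : Finset (Multiplicative (ι → ℤ))}

local notation "Bₛ" => ∑ s ∈ S, ‖s‖

local notation "Cₛ" => ∑ i, (wordLength (S : Set _) (ofAdd (Pi.single i 1 : ι → ℤ)) : ℝ)

theorem Lk_mulVecEnd_le (hS : Subgroup.closure (S : Set (Multiplicative (ι → ℤ))) = ⊤)
    (D : Matrix ι ι ℤ) (k : ℕ) : (Lk S D.mulVecEnd k : ℝ) ≤ Cₛ * Bₛ * ‖D ^ k‖ := by
  refine Lk_le_of_forall_le _ _ (by positivity) fun s hs => ?_
  calc (wordLength (S : Set _) ((⇑D.mulVecEnd)^[k] s) : ℝ)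
      = wordLengthSeminorm hS (ofAdd ((D ^ k) *ᵥ s.toAdd)) := by rw [mulVecEnd_iterate]; rfl
    _ ≤ ‖(D ^ k) *ᵥ s.toAdd‖ * Cₛ := GroupSeminorm.apply_ofAdd_le _ _
    _ ≤ ‖D ^ k‖ * Bₛ * Cₛ := by
        gcongr
        refine (linfty_opNorm_mulVec _ _).trans ?_
        gcongr
        exact Finset.single_le_sum (fun t _ => norm_nonneg' t) hs
    _ = Cₛ * Bₛ * ‖D ^ k‖ := by ring

theorem norm_pow_le_Lk_mulVecEnd (hS : Subgroup.closure (S : Set (Multiplicative (ι → ℤ))) = ⊤)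
    (D : Matrix ι ι ℤ) (k : ℕ) : ‖D ^ k‖ ≤ Cₛ * Bₛ * Lk S D.mulVecEnd k := by
  set N := normGroupSeminorm (Multiplicative (ι → ℤ))
  have hnorm : ∀ g, N g ≤ wordLength (S : Set _) g * Bₛ :=
    N.apply_le_wordLength_mul hS fun s hs => Finset.single_le_sum (fun t _ => norm_nonneg' t) hs
  have himage : ∀ s ∈ S, N.comp (D.mulVecEnd ^ k) s ≤ Lk S D.mulVecEnd k * Bₛ :=
    fun s hs => (hnorm _).trans (by gcongr; exact_mod_cast wordLength_iterate_le_Lk _ k hs)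
  calc ‖D ^ k‖ ≤ ∑ j, ‖(D ^ k).col j‖ := linfty_opNorm_le_sum_norm_col _
    _ = ∑ j, N.comp (D.mulVecEnd ^ k) (ofAdd (Pi.single j 1)) := by
        refine Finset.sum_congr rfl fun j _ => ?_
        change _ = ‖(⇑(D.mulVecEnd ^ k)) (ofAdd _)‖
        rw [Monoid.End.coe_pow, mulVecEnd_iterate, toAdd_ofAdd, mulVec_single_one]
        rfl
    _ ≤ ∑ j, wordLength (S : Set _) (ofAdd (Pi.single j 1 : ι → ℤ)) *
          (Lk S D.mulVecEnd k * Bₛ) := by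
        gcongr with j
        exact (N.comp _).apply_le_wordLength_mul hS himage _
    _ = Cₛ * Bₛ * Lk S D.mulVecEnd k := by rw [← Finset.sum_mul]; ring

theorem exists_Lk_mulVecEnd_comparable
    (hS : Subgroup.closure (S : Set (Multiplicative (ι → ℤ))) = ⊤) (D : Matrix ι ι ℤ) :
    ∃ c > 0, ∀ k, (Lk S D.mulVecEnd k : ℝ) ≤ c * ‖D ^ k‖ ∧ ‖D ^ k‖ ≤ c * Lk S D.mulVecEnd k := by
  have hc : 0 ≤ Cₛ * Bₛ := by positivity
  refine ⟨Cₛ * Bₛ + 1, by positivity, fun k => ⟨?_, ?_⟩⟩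
  · exact (Lk_mulVecEnd_le hS D k).trans (by gcongr; linarith)
  · exact (norm_pow_le_Lk_mulVecEnd hS D k).trans (by gcongr; linarith)

end IntegerLattice

/-- For an endomorphism of `ℤⁿ` given by an integer matrix `D`,
`GR(φ) = sp(D)`, the maximum of the absolute values of the complex eigenvalues of `D`. -/
theorem GR_zn_eq_spectralRadius (n : ℕ) (D : Matrix (Fin n) (Fin n) ℤ)
    (S : Finset (Multiplicative (Fin n → ℤ)))
    (hS : Subgroup.closure (S : Set (Multiplicative (Fin n → ℤ))) = ⊤) :
    GR S (fun x => Multiplicative.ofAdd (D.mulVec (Multiplicative.toAdd x))) =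
      sSup {r : ℝ | ∃ μ : ℂ,
        ((D.map (fun i => (i : ℂ))).charpoly.IsRoot μ) ∧ r = ‖μ‖} := by
  obtain ⟨c, hc, hcomp⟩ := exists_Lk_mulVecEnd_comparable hS D
  exact iInf_rpow_inv_eq_of_submultiplicative (L := fun k => (Lk S D.mulVecEnd k : ℝ)) hc
    (fun _ => Nat.cast_nonneg _) (fun _ => norm_nonneg _) (Lk_add_le_mul hS _)
    (fun k => (hcomp k).1) (fun k => (hcomp k).2) D.tendsto_norm_pow_rpow_inv
end

section
/- Let π be a finitely generated group, φ: π → π an endomorphism, and π' a φ-invariant subgroup of finite index in π. If the restriction φ' = φ|_{π'} is an eventually trivial endomorphism of π', then GR(φ') = 0 and GR(φ) ∈ {0, 1}; moreover, GR(φ) = 0 if and only if φ is an eventually trivial endomorphism of π. -/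
open Filter Topology

/-!
If `φ^M` kills the finite-index subgroup `π'`, then `φ^M` factors through the finite set
`π / π'`, so `φ^k` has finite image for every `k ≥ M` and the lengths `L_k(φ, S)` stay bounded:
hence `GR(φ) ≤ 1`. On the other hand `L_k(φ, S) = 0` forces `φ^k = 1` on the generators, so
unless `φ` is eventually trivial every `L_k(φ, S)` is at least `1`, and `GR(φ) ≥ 1`.
-/

section WordLength

variable {G : Type*} [Group G]

lemma wordLength_one (S : Set G) : wordLength S 1 = 0 := by
  apply Nat.sInf_eq_zero.mpr
  exact Or.inl ⟨[], rfl, by simp, rfl⟩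

lemma eq_one_of_wordLength_eq_zero {S : Set G} (hS : Subgroup.closure S = ⊤) {g : G}
    (h : wordLength S g = 0) : g = 1 := by
  have hmem : g ∈ Submonoid.closure (S ∪ S⁻¹) := by
    rw [← Subgroup.closure_toSubmonoid, hS]; trivial
  obtain ⟨l, hl, hprod⟩ := Submonoid.exists_list_of_mem_closure hmem
  have hword : wordLength S g ∈
      {n : ℕ | ∃ w : List G, w.length = n ∧ (∀ x ∈ w, x ∈ S ∨ x⁻¹ ∈ S) ∧ w.prod = g} :=
    Nat.sInf_mem ⟨l.length, l, rfl, fun x hx => by simpa using hl x hx, hprod⟩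
  obtain ⟨w, hlen, -, rfl⟩ := h ▸ hword
  simp [List.length_eq_zero_iff.mp hlen]

end WordLength

section GrowthRate

variable {G : Type*} [Group G] (S : Finset G) (f : G → G)

lemma Lk_eq_zero_of_iterate_eq_one {k : ℕ} (h : ∀ g, f^[k] g = 1) : Lk S f k = 0 :=
  Nat.le_zero.mp <| Finset.sup_le fun s _ => by rw [h s, wordLength_one]

lemma Lk_le_of_finite_range_iterate {M : ℕ} (hfin : (Set.range f^[M]).Finite) :
    ∃ C, ∀ k, M ≤ k → Lk S f k ≤ C := by
  refine ⟨hfin.toFinset.sup (wordLength (S : Set G)), fun k hk => Finset.sup_le fun s _ => ?_⟩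
  refine Finset.le_sup (hfin.mem_toFinset.mpr ⟨f^[k - M] s, ?_⟩)
  rw [← Function.iterate_add_apply, Nat.add_sub_cancel' hk]

lemma GR_le (k : ℕ+) : GR S f ≤ (Lk S f k : ℝ) ^ ((k : ℕ) : ℝ)⁻¹ :=
  ciInf_le ⟨0, by rintro _ ⟨j, rfl⟩; positivity⟩ k

lemma GR_eq_zero_of_eventuallyTrivial (h : EventuallyTrivial f) : GR S f = 0 := by
  obtain ⟨M, hM, hMt⟩ := h
  refine le_antisymm ?_ (le_ciInf fun _ => by positivity)
  calc GR S f ≤ (Lk S f M : ℝ) ^ (M : ℝ)⁻¹ := GR_le S f ⟨M, hM⟩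
    _ = 0 := by
      rw [Lk_eq_zero_of_iterate_eq_one S f hMt, Nat.cast_zero,
        Real.zero_rpow (inv_ne_zero (Nat.cast_ne_zero.mpr hM.ne'))]

lemma one_le_GR (h : ∀ k, 0 < k → 1 ≤ Lk S f k) : 1 ≤ GR S f :=
  le_ciInf fun k => Real.one_le_rpow (by exact_mod_cast h k k.2) (by positivity)

lemma GR_le_one_of_Lk_le {C M : ℕ} (hC : ∀ k, M ≤ k → Lk S f k ≤ C) : GR S f ≤ 1 := by
  have hbound : Tendsto (fun k : ℕ => (max C 1 : ℝ) ^ (k : ℝ)⁻¹) atTop (𝓝 1) := by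
    simpa using tendsto_const_nhds.rpow (tendsto_inv_atTop_zero.comp tendsto_natCast_atTop_atTop)
      (Or.inl (by positivity))
  refine ge_of_tendsto hbound <| (eventually_ge_atTop (M + 1)).mono fun k hk => ?_
  calc GR S f ≤ (Lk S f k : ℝ) ^ (k : ℝ)⁻¹ := GR_le S f ⟨k, by omega⟩
    _ ≤ (max C 1 : ℝ) ^ (k : ℝ)⁻¹ := by
      gcongr
      exact_mod_cast (hC k (by omega)).trans (le_max_left _ _)

end GrowthRate

lemma MonoidHom.one_le_Lk_of_not_eventuallyTrivial {G : Type*} [Group G] {S : Finset G}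
    (hS : Subgroup.closure (S : Set G) = ⊤) {φ : G →* G} (hφ : ¬EventuallyTrivial φ) {k : ℕ}
    (hk : 0 < k) : 1 ≤ Lk S φ k := by
  by_contra hlt
  have hLk : Lk S φ k = 0 := by omega
  have hgen : ∀ s ∈ S, φ^[k] s = 1 := fun s hs =>
    eq_one_of_wordLength_eq_zero hS <| Nat.le_zero.mp <| (Finset.le_sup hs).trans hLk.le
  refine hφ ⟨k, hk, fun g => ?_⟩
  induction (hS ▸ Subgroup.mem_top g : g ∈ Subgroup.closure (S : Set G))
    using Subgroup.closure_induction with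
  | mem s hs => exact hgen s hs
  | one => exact iterate_map_one φ k
  | mul a b _ _ ha hb => rw [iterate_map_mul, ha, hb, one_mul]
  | inv a _ ha => rw [iterate_map_inv, ha, inv_one]

lemma MonoidHom.finite_range_of_le_ker {G H : Type*} [Group G] [Group H] (f : G →* H)
    (N : Subgroup G) [N.FiniteIndex] (hN : N ≤ f.ker) : (Set.range f).Finite := by
  have hindex : Nat.card f.range ≠ 0 := by
    rw [← Subgroup.index_ker]
    exact (Subgroup.finiteIndex_of_le hN).index_ne_zero
  rw [← MonoidHom.coe_range]
  exact @Set.toFinite _ _ (Nat.finite_of_card_ne_zero hindex)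

lemma MonoidHom.finite_range_iterate_of_eventuallyTrivial_restrict {G : Type*} [Group G]
    (φ : G →* G) (N : Subgroup G) [N.FiniteIndex] (hinv : ∀ g ∈ N, φ g ∈ N)
    (ht : EventuallyTrivial (fun x : N => (⟨φ x, hinv x x.2⟩ : N))) :
    ∃ M, (Set.range φ^[M]).Finite := by
  obtain ⟨M, -, hM⟩ := ht
  have hsemiconj : Function.Semiconj ((↑) : N → G) (fun x : N => ⟨φ x, hinv x x.2⟩) φ :=
    fun _ => rfl
  let ψ : G →* G := .mk' φ^[M] (iterate_map_mul φ M)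
  have hN : N ≤ ψ.ker := fun g hg => by
    rw [MonoidHom.mem_ker, MonoidHom.mk'_apply, ← hsemiconj.iterate_right M ⟨g, hg⟩, hM]
    rfl
  exact ⟨M, ψ.finite_range_of_le_ker N hN⟩

theorem GR_of_finiteIndex_eventuallyTrivial_general {π : Type*} [Group π] (S : Finset π)
    (hS : Subgroup.closure (S : Set π) = ⊤) (φ : π →* π)
    (N : Subgroup π) [N.FiniteIndex] (hinv : ∀ g ∈ N, φ g ∈ N)
    (S' : Finset N)
    (ht : EventuallyTrivial (fun x : N => (⟨φ x, hinv x x.2⟩ : N))) :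
    GR S' (fun x : N => (⟨φ x, hinv x x.2⟩ : N)) = 0 ∧
    (GR S ⇑φ = 0 ∨ GR S ⇑φ = 1) ∧
    (GR S ⇑φ = 0 ↔ EventuallyTrivial ⇑φ) := by
  refine ⟨GR_eq_zero_of_eventuallyTrivial _ _ ht, ?_⟩
  by_cases hφ : EventuallyTrivial φ
  · have h0 := GR_eq_zero_of_eventuallyTrivial S φ hφ
    exact ⟨.inl h0, iff_of_true h0 hφ⟩
  obtain ⟨M, hfin⟩ := φ.finite_range_iterate_of_eventuallyTrivial_restrict N hinv ht
  obtain ⟨C, hC⟩ := Lk_le_of_finite_range_iterate S φ hfin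
  have h1 : GR S φ = 1 := le_antisymm (GR_le_one_of_Lk_le S φ hC)
    (one_le_GR S φ fun _ hk => φ.one_le_Lk_of_not_eventuallyTrivial hS hφ hk)
  exact ⟨.inr h1, iff_of_false (by simp [h1]) hφ⟩

/-- If `π'` is a `φ`-invariant finite-index subgroup of the finitely
generated group `π` and the restriction `φ' = φ|_{π'}` is eventually trivial, then
`GR(φ') = 0`, `GR(φ) ∈ {0, 1}`, and `GR(φ) = 0` iff `φ` is eventually trivial. -/
theorem GR_of_finiteIndex_eventuallyTrivial {π : Type*} [Group π] (S : Finset π)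
    (hS : Subgroup.closure (S : Set π) = ⊤) (φ : π →* π)
    (N : Subgroup π) [N.FiniteIndex] (hinv : ∀ g ∈ N, φ g ∈ N)
    (S' : Finset N) (hS' : Subgroup.closure (S' : Set N) = ⊤)
    (ht : EventuallyTrivial (fun x : N => (⟨φ x, hinv x x.2⟩ : N))) :
    GR S' (fun x : N => (⟨φ x, hinv x x.2⟩ : N)) = 0 ∧
    (GR S ⇑φ = 0 ∨ GR S ⇑φ = 1) ∧
    (GR S ⇑φ = 0 ↔ EventuallyTrivial ⇑φ) :=
  GR_of_finiteIndex_eventuallyTrivial_general S hS φ N hinv S' ht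
end
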